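/- For every complex number q with |q| < 1, the following identity holds: Σ_{n≥0} q^{4n+1} · (q^{4n+4}; q^4)_∞ · (q; q)_{2n} = 2q^2(q^4; q^4)_∞/(1+q^3) + q(1−q)(q; q)_∞/(1+q^3). -/

import Mathlib

/-- The finite q-Pochhammer symbol `(a; q)_n = ∏_{j=0}^{n-1} (1 - a q^j)`. -/
noncomputable def qPoch (a q : ℂ) (n : ℕ) : ℂ := ∏ j ∈ Finset.range n, (1 - a * q ^ j)

/-- The infinite q-Pochhammer symbol `(a; q)_∞ = ∏_{j=0}^{∞} (1 - a q^j)`. -/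
noncomputable def qPochInf (a q : ℂ) : ℂ := ∏' j : ℕ, (1 - a * q ^ j)

/-!
The summand is the backward difference `G n - G (n + 1)` of the `antidifference`
`G n = (q² - q + q^(2n+2) + q^(4n+1)) (q^(4n+4); q⁴)_∞ (q; q)_(2n) / (1 + q³)`,
as one checks by peeling the factor `1 - q^(4n+4)` off the infinite product and the factors
`(1 - q^(2n+1)) (1 - q^(2n+2))` off `(q; q)_(2n+2)`. The series therefore telescopes to
`G 0 - lim G`, where `G 0 = 2q² (q⁴; q⁴)_∞ / (1 + q³)` and, since `(q^(4n+4); q⁴)_∞ → 1`,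
`lim G = (q² - q) (q; q)_∞ / (1 + q³)`. The series converges absolutely because its terms are
`q^(4n)` times a convergent sequence.
-/

open Filter Topology Asymptotics

theorem tsum_eq_sub_of_tendsto {E : Type*} [AddCommGroup E] [TopologicalSpace E]
    [IsTopologicalAddGroup E] [T2Space E] {f G : ℕ → E} {L : E} (hf : Summable f)
    (hfG : ∀ n, f n = G n - G (n + 1)) (hG : Tendsto G atTop (𝓝 L)) :
    ∑' n, f n = G 0 - L := by
  have hpartial : ∀ N, ∑ n ∈ Finset.range N, f n = G 0 - G N := fun N => by
    simp only [hfG, Finset.sum_range_sub']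
  refine tendsto_nhds_unique hf.hasSum.tendsto_sum_nat ?_
  simpa only [hpartial] using tendsto_const_nhds.sub hG

theorem summable_pow_mul_of_tendsto {R : Type*} [NormedRing R] [NormOneClass R]
    [CompleteSpace R] {z : R} (hz : ‖z‖ < 1) {c : ℕ → R} {L : R} (hc : Tendsto c atTop (𝓝 L)) :
    Summable fun n => z ^ n * c n := by
  refine summable_of_isBigO_nat (summable_geometric_of_lt_one (norm_nonneg z) hz) ?_
  have hpow : (fun n => z ^ n) =O[atTop] fun n => ‖z‖ ^ n :=
    isBigO_of_le _ fun n => by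
      simpa only [Real.norm_eq_abs, abs_pow, abs_norm] using norm_pow_le z n
  simpa only [mul_one] using hpow.mul (hc.isBigO_one ℝ)

section QPochhammer

variable {w : ℂ}

theorem summable_norm_mul_pow (a : ℂ) (hw : ‖w‖ < 1) : Summable fun j : ℕ => ‖a * w ^ j‖ := by
  simpa only [norm_mul, norm_pow] using
    (summable_geometric_of_lt_one (norm_nonneg w) hw).mul_left ‖a‖

theorem hasProd_qPochInf (a : ℂ) (hw : ‖w‖ < 1) :
    HasProd (fun j : ℕ => 1 - a * w ^ j) (qPochInf a w) := by
  have : Multipliable fun j : ℕ => 1 + -(a * w ^ j) :=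
    multipliable_one_add_of_summable (by simpa only [norm_neg] using summable_norm_mul_pow a hw)
  unfold qPochInf
  simpa only [← sub_eq_add_neg] using this.hasProd

theorem tendsto_qPoch_qPochInf (a : ℂ) (hw : ‖w‖ < 1) :
    Tendsto (qPoch a w) atTop (𝓝 (qPochInf a w)) :=
  (hasProd_qPochInf a hw).tendsto_prod_nat

theorem qPochInf_eq_one_sub_mul (a : ℂ) (hw : ‖w‖ < 1) :
    qPochInf a w = (1 - a) * qPochInf (a * w) w := by
  have hshift : (fun j : ℕ => 1 - a * w ^ (j + 1)) = fun j => 1 - a * w * w ^ j := by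
    funext j; ring
  unfold qPochInf
  rw [tprod_eq_zero_mul' (by rw [hshift]; exact (hasProd_qPochInf (a * w) hw).multipliable),
    pow_zero, mul_one, hshift]

theorem qPochInf_zero_left : qPochInf 0 w = 1 := by
  simp [qPochInf]

theorem continuous_qPochInf_left (hw : ‖w‖ < 1) : Continuous fun a => qPochInf a w := by
  refine continuous_iff_continuousAt.mpr fun a₀ => ?_
  have hbound : ∀ᶠ a in 𝓝 a₀, ∀ j : ℕ, ‖-(a * w ^ j)‖ ≤ (‖a₀‖ + 1) * ‖w‖ ^ j := by
    filter_upwards [Metric.closedBall_mem_nhds a₀ one_pos] with a ha j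
    rw [norm_neg, norm_mul, norm_pow]
    gcongr
    linarith [norm_le_norm_add_norm_sub' a a₀, mem_closedBall_iff_norm.mp ha]
  have := tendsto_tprod_one_add_of_dominated_convergence
    ((summable_geometric_of_lt_one (norm_nonneg w) hw).mul_left _)
    (fun j => (tendsto_id.mul_const (w ^ j)).neg) hbound
  simpa only [ContinuousAt, qPochInf, id_eq, ← sub_eq_add_neg] using this

end QPochhammer

theorem norm_pow_lt_one {z : ℂ} (hz : ‖z‖ < 1) {k : ℕ} (hk : k ≠ 0) : ‖z ^ k‖ < 1 := by
  simpa only [norm_pow] using pow_lt_one₀ (norm_nonneg z) hz hk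

noncomputable def antidifference (q : ℂ) (n : ℕ) : ℂ :=
  (q ^ 2 - q + q ^ (2 * n + 2) + q ^ (4 * n + 1)) * qPochInf (q ^ (4 * n + 4)) (q ^ 4) *
    qPoch q q (2 * n) / (1 + q ^ 3)

section Identity

variable {q : ℂ}

theorem one_add_pow_three_ne_zero (hq : ‖q‖ < 1) : 1 + q ^ 3 ≠ 0 := by
  rw [add_comm, ← sub_neg_eq_add, sub_ne_zero]
  refine fun h => (norm_pow_lt_one hq three_ne_zero).ne ?_
  rw [h, norm_neg, norm_one]

theorem summand_eq_antidifference_sub (hq : ‖q‖ < 1) (n : ℕ) :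
    q ^ (4 * n + 1) * qPochInf (q ^ (4 * n + 4)) (q ^ 4) * qPoch q q (2 * n) =
      antidifference q n - antidifference q (n + 1) := by
  have hpeel := qPochInf_eq_one_sub_mul (q ^ (4 * n + 4)) (norm_pow_lt_one hq four_ne_zero)
  rw [← pow_add, show 4 * n + 4 + 4 = 4 * (n + 1) + 4 by ring] at hpeel
  rw [antidifference, antidifference, hpeel, show 2 * (n + 1) = 2 * n + 1 + 1 by ring, qPoch,
    qPoch, Finset.prod_range_succ, Finset.prod_range_succ, div_sub_div_same,
    eq_div_iff (one_add_pow_three_ne_zero hq)]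
  ring

theorem tendsto_pow_mul_add_nhds_zero (hq : ‖q‖ < 1) (a b : ℕ) (ha : a ≠ 0) :
    Tendsto (fun n : ℕ => q ^ (a * n + b)) atTop (𝓝 0) :=
  (tendsto_pow_atTop_nhds_zero_of_norm_lt_one hq).comp <|
    tendsto_atTop_mono (fun n => (Nat.le_mul_of_pos_left n (Nat.pos_of_ne_zero ha)).trans
      (Nat.le_add_right _ b)) tendsto_id

theorem tendsto_qPochInf_tail (hq : ‖q‖ < 1) :
    Tendsto (fun n : ℕ => qPochInf (q ^ (4 * n + 4)) (q ^ 4)) atTop (𝓝 1) := by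
  simpa only [qPochInf_zero_left, Function.comp_def] using
    ((continuous_qPochInf_left (norm_pow_lt_one hq four_ne_zero)).tendsto 0).comp
      (tendsto_pow_mul_add_nhds_zero hq 4 4 four_ne_zero)

theorem tendsto_qPoch_two_mul (hq : ‖q‖ < 1) :
    Tendsto (fun n : ℕ => qPoch q q (2 * n)) atTop (𝓝 (qPochInf q q)) :=
  (tendsto_qPoch_qPochInf q hq).comp (tendsto_id.const_mul_atTop' two_pos)

theorem tendsto_antidifference (hq : ‖q‖ < 1) :
    Tendsto (antidifference q) atTop (𝓝 ((q ^ 2 - q) * qPochInf q q / (1 + q ^ 3))) := by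
  have hcoeff : Tendsto (fun n : ℕ => q ^ 2 - q + q ^ (2 * n + 2) + q ^ (4 * n + 1)) atTop
      (𝓝 (q ^ 2 - q)) := by
    simpa only [add_zero] using
      (tendsto_const_nhds.add (tendsto_pow_mul_add_nhds_zero hq 2 2 two_ne_zero)).add
        (tendsto_pow_mul_add_nhds_zero hq 4 1 four_ne_zero)
  have hlim :=
    ((hcoeff.mul (tendsto_qPochInf_tail hq)).mul (tendsto_qPoch_two_mul hq)).div_const (1 + q ^ 3)
  rwa [mul_one] at hlim

theorem summable_summand (hq : ‖q‖ < 1) :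
    Summable fun n : ℕ =>
      q ^ (4 * n + 1) * qPochInf (q ^ (4 * n + 4)) (q ^ 4) * qPoch q q (2 * n) := by
  have hlim := ((tendsto_qPochInf_tail hq).mul (tendsto_qPoch_two_mul hq)).const_mul q
  refine (summable_pow_mul_of_tendsto (norm_pow_lt_one hq four_ne_zero) hlim).congr fun n => ?_
  ring

end Identity

theorem stmt_4 (q : ℂ) (hq : ‖q‖ < 1) :
    ∑' n : ℕ, q ^ (4 * n + 1) * qPochInf (q ^ (4 * n + 4)) (q ^ 4) * qPoch q q (2 * n) =
      2 * q ^ 2 * qPochInf (q ^ 4) (q ^ 4) / (1 + q ^ 3) +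
        q * (1 - q) * qPochInf q q / (1 + q ^ 3) := by
  rw [tsum_eq_sub_of_tendsto (summable_summand hq) (summand_eq_antidifference_sub hq)
    (tendsto_antidifference hq), antidifference]
  simp only [qPoch, mul_zero, zero_add, Finset.range_zero, Finset.prod_empty, mul_one]
  ring
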